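/- Let L and D be N×N matrices with non-negative real entries such that L_{jl} ≤ L_{jj} and L_{jl} ≤ L_{ll} for all j,l, and D_{jl} ≤ max{D_{jj}, D_{ll}} for all j,l. Then (1/N) · Σ_{j,l=1}^{N} √(L_{jl} D_{jl}) ≤ 2 · Σ_{j=1}^{N} √(L_{jj} D_{jj}). -/

import Mathlib

/-!
Comparing `D j l` with the larger of `D j j` and `D l l`, say `D j j`, and `L j l` with `L j j` gives
`L j l * D j l ≤ L j j * D j j`, so every off-diagonal term `√(L j l * D j l)` is at most
`√(L j j * D j j) + √(L l l * D l l)`. Summing over all `N²` pairs, each diagonal term is counted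
`2N` times.
-/

open Finset Real

theorem sqrt_mul_le_sqrt_mul_add_sqrt_mul {x y a b c d : ℝ} (hy : 0 ≤ y) (ha : 0 ≤ a) (hb : 0 ≤ b)
    (hxa : x ≤ a) (hxb : x ≤ b) (hycd : y ≤ max c d) :
    √(x * y) ≤ √(a * c) + √(b * d) := by
  rcases le_total d c with hdc | hcd
  · calc √(x * y) ≤ √(a * c) :=
          sqrt_le_sqrt (mul_le_mul hxa (hycd.trans_eq (max_eq_left hdc)) hy ha)
      _ ≤ √(a * c) + √(b * d) := le_add_of_nonneg_right (sqrt_nonneg _)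
  · calc √(x * y) ≤ √(b * d) :=
          sqrt_le_sqrt (mul_le_mul hxb (hycd.trans_eq (max_eq_right hcd)) hy hb)
      _ ≤ √(a * c) + √(b * d) := le_add_of_nonneg_left (sqrt_nonneg _)

theorem sum_sum_le_two_mul_card_mul_sum {ι : Type*} [Fintype ι] {f : ι → ι → ℝ} {g : ι → ℝ}
    (h : ∀ j l, f j l ≤ g j + g l) :
    ∑ j, ∑ l, f j l ≤ 2 * Fintype.card ι * ∑ j, g j :=
  calc ∑ j, ∑ l, f j l ≤ ∑ j, ∑ l, (g j + g l) := sum_le_sum fun j _ ↦ sum_le_sum fun l _ ↦ h j l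
    _ = 2 * Fintype.card ι * ∑ j, g j := by
      simp only [sum_add_distrib, sum_const, card_univ, nsmul_eq_mul, ← mul_sum]
      ring

theorem one_div_card_mul_sum_sum_le_two_mul_sum {ι : Type*} [Fintype ι] {f : ι → ι → ℝ}
    {g : ι → ℝ} (h : ∀ j l, f j l ≤ g j + g l) :
    1 / (Fintype.card ι : ℝ) * ∑ j, ∑ l, f j l ≤ 2 * ∑ j, g j := by
  rcases isEmpty_or_nonempty ι with hι | hι
  · simp
  have hcard : (0 : ℝ) < Fintype.card ι := by exact_mod_cast Fintype.card_pos
  calc 1 / (Fintype.card ι : ℝ) * ∑ j, ∑ l, f j l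
      ≤ 1 / (Fintype.card ι : ℝ) * (2 * Fintype.card ι * ∑ j, g j) :=
        mul_le_mul_of_nonneg_left (sum_sum_le_two_mul_card_mul_sum h) (by positivity)
    _ = 2 * ∑ j, g j := by field_simp

/-- matrix lemma on square roots of entrywise-dominated matrices. -/
theorem matrix_sqrt_sum_bound (N : ℕ) (L D : Fin N → Fin N → ℝ)
    (hL0 : ∀ j l, 0 ≤ L j l) (hD0 : ∀ j l, 0 ≤ D j l)
    (hL1 : ∀ j l, L j l ≤ L j j) (hL2 : ∀ j l, L j l ≤ L l l)
    (hD : ∀ j l, D j l ≤ max (D j j) (D l l)) :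
    (1 / (N : ℝ)) * ∑ j, ∑ l, Real.sqrt (L j l * D j l)
      ≤ 2 * ∑ j, Real.sqrt (L j j * D j j) := by
  simpa using one_div_card_mul_sum_sum_le_two_mul_sum fun j l ↦
    sqrt_mul_le_sqrt_mul_add_sqrt_mul (hD0 j l) (hL0 j j) (hL0 l l) (hL1 j l) (hL2 j l) (hD j l)
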